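/- Let G be a finite graph and T a tournament on the same vertex set. If for every vertex v the out-neighbourhood N⁺_T(v) is an independent set of G, then χ(G) ≤ 3. -/

import Mathlib

/-- A tournament on `V`: an orientation of the complete graph, i.e. an irreflexive
relation such that for distinct vertices exactly one direction is present. -/
def IsTournament {V : Type*} (r : V → V → Prop) : Prop :=
  (∀ v, ¬ r v v) ∧ ∀ u v : V, u ≠ v → (r u v ↔ ¬ r v u)

namespace IsTournament

variable {V : Type*} {r : V → V → Prop}

lemma rel_of_not_rel (hr : IsTournament r) {u v : V} (huv : u ≠ v) (h : ¬ r u v) : r v u :=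
  (hr.2 v u huv.symm).2 h

variable {G : SimpleGraph V} {a b : V}

/-- Such a `v` beats `a`, so if it also beat `b` then `a` and `b` would be adjacent
out-neighbours of `v`. -/
lemma rel_of_adj_of_not_rel (hr : IsTournament r)
    (h : ∀ v : V, ∀ x, r v x → ∀ y, r v y → ¬ G.Adj x y) (hab : G.Adj a b) (hrab : r a b)
    {v : V} (hva : v ≠ a) (hav : ¬ r a v) : r b v := by
  have hvb : v ≠ b := by rintro rfl; exact hav hrab
  by_contra hbv
  exact h v a (hr.rel_of_not_rel hva.symm hav) b (hr.rel_of_not_rel hvb.symm hbv) hab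

/-- The colour classes are `N⁺(a)`, `{a}` and the rest, which lies inside `N⁺(b)`. -/
lemma colorable_three_of_adj_of_rel (hr : IsTournament r)
    (h : ∀ v : V, ∀ x, r v x → ∀ y, r v y → ¬ G.Adj x y) (hab : G.Adj a b) (hrab : r a b) :
    G.Colorable 3 := by
  classical
  refine ⟨SimpleGraph.Coloring.mk
    (fun v => if r a v then 0 else if v = a then (1 : Fin 3) else 2) fun {u v} huv => ?_⟩
  split_ifs <;> try decide
  next hu hv => exact (h a u hu v hv huv).elim
  next _ hua _ hva => subst hua hva; exact (G.loopless.irrefl _ huv).elim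
  next hu hua hv hva =>
    exact (h b u (rel_of_adj_of_not_rel hr h hab hrab hua hu) v
      (rel_of_adj_of_not_rel hr h hab hrab hva hv) huv).elim

end IsTournament

theorem stmt_8_general {V : Type*}
    (G : SimpleGraph V) (r : V → V → Prop) (hr : IsTournament r)
    (h : ∀ v : V, ∀ x, r v x → ∀ y, r v y → ¬ G.Adj x y) :
    G.chromaticNumber ≤ 3 := by
  suffices G.Colorable 3 from mod_cast this.chromaticNumber_le
  by_cases hG : ∃ a b, G.Adj a b
  · obtain ⟨a, b, hab⟩ := hG
    by_cases hrab : r a b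
    · exact hr.colorable_three_of_adj_of_rel h hab hrab
    · exact hr.colorable_three_of_adj_of_rel h hab.symm (hr.rel_of_not_rel hab.ne hrab)
  · push Not at hG
    exact ⟨SimpleGraph.Coloring.mk (fun _ => 0) fun huv => (hG _ _ huv).elim⟩

/-- If G is a finite graph and T a tournament on the same vertex set such
that every out-neighbourhood N⁺_T(v) is an independent set of G, then χ(G) ≤ 3. -/
theorem stmt_8 {V : Type*} [Fintype V]
    (G : SimpleGraph V) (r : V → V → Prop) (hr : IsTournament r)
    (h : ∀ v : V, ∀ x, r v x → ∀ y, r v y → ¬ G.Adj x y) :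
    G.chromaticNumber ≤ 3 :=
  stmt_8_general G r hr h
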